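/- arXiv:2101.00710 — 5 statements merged into one kernel-verified Lean document; each statement's English description precedes it below -/
import Mathlib

section
/- Let Φ={φ_i}_{i∈I} and Ψ={ψ_i}_{i∈I} be frames for a Hilbert space H with upper bounds B_Φ, B_Ψ and let A_Φ be a lower bound of Φ. Suppose there is 0<λ<1 with λ(√B_Φ+√B_Ψ) ≤ A_Φ/2 and ‖∑_{i∈I} a_i(φ_i−ψ_i)‖ ≤ λ‖{a_i}‖_{ℓ²} for all finitely supported scalar sequences {a_i}. Then for every σ⊂I, the family {φ_i}_{i∈σ} ∪ {ψ_i}_{i∈σ^c} is a frame for H with frame bounds A_Φ/2 and B_Φ+B_Ψ; in particular Φ and Ψ are woven. -/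
open scoped ComplexInnerProductSpace

/-- If `Φ`, `Ψ` are frames with upper bounds `B_Φ`, `B_Ψ`, `A_Φ` a lower
bound of `Φ`, and there is `0 < λ < 1` with `λ(√B_Φ + √B_Ψ) ≤ A_Φ/2` and
`‖∑ a_i (φ_i − ψ_i)‖ ≤ λ‖{a_i}‖₂` for all finitely supported scalars, then for every
`σ ⊆ I` the family `{φ_i}_{i∈σ} ∪ {ψ_i}_{i∈σᶜ}` is a frame with bounds `A_Φ/2` and
`B_Φ + B_Ψ`; in particular `Φ` and `Ψ` are woven. -/
theorem stmt1 {H : Type*} [NormedAddCommGroup H] [InnerProductSpace ℂ H] [CompleteSpace H]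
    {I : Type*} [Countable I] (φ ψ : I → H) (Aφ Bφ Aψ Bψ : ℝ)
    (hAφ : 0 < Aφ) (hAψ : 0 < Aψ)
    (hφ : ∀ f : H, Aφ * ‖f‖ ^ 2 ≤ ∑' i : I, ‖⟪f, φ i⟫‖ ^ 2 ∧
      ∑' i : I, ‖⟪f, φ i⟫‖ ^ 2 ≤ Bφ * ‖f‖ ^ 2)
    (hψ : ∀ f : H, Aψ * ‖f‖ ^ 2 ≤ ∑' i : I, ‖⟪f, ψ i⟫‖ ^ 2 ∧
      ∑' i : I, ‖⟪f, ψ i⟫‖ ^ 2 ≤ Bψ * ‖f‖ ^ 2)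
    (lam : ℝ) (hlam0 : 0 < lam) (hlam1 : lam < 1)
    (hlam : lam * (Real.sqrt Bφ + Real.sqrt Bψ) ≤ Aφ / 2)
    (happrox : ∀ (a : I → ℂ) (s : Finset I),
      ‖∑ i ∈ s, a i • (φ i - ψ i)‖ ≤ lam * Real.sqrt (∑ i ∈ s, ‖a i‖ ^ 2)) :
    ∀ (σ : Set I) (f : H),
      Aφ / 2 * ‖f‖ ^ 2 ≤ (∑' i : σ, ‖⟪f, φ i⟫‖ ^ 2) + ∑' i : ↥σᶜ, ‖⟪f, ψ i⟫‖ ^ 2 ∧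
      (∑' i : σ, ‖⟪f, φ i⟫‖ ^ 2) + (∑' i : ↥σᶜ, ‖⟪f, ψ i⟫‖ ^ 2) ≤ (Bφ + Bψ) * ‖f‖ ^ 2 := by
  classical
  intro σ f
  by_cases hf : f = 0
  · subst hf; simp
  have hfn : 0 < ‖f‖ := norm_pos_iff.2 hf
  have hfn2 : 0 < ‖f‖ ^ 2 := by positivity
  -- summability of the two coefficient sequences
  have hsc : Summable (fun i : I => ‖⟪f, φ i⟫‖ ^ 2) := by
    by_contra h
    have h0 := tsum_eq_zero_of_not_summable h
    have h1 := (hφ f).1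
    rw [h0] at h1
    nlinarith
  have hsd : Summable (fun i : I => ‖⟪f, ψ i⟫‖ ^ 2) := by
    by_contra h
    have h0 := tsum_eq_zero_of_not_summable h
    have h1 := (hψ f).1
    rw [h0] at h1
    nlinarith
  have hBφ : 0 < Bφ := by
    have h := le_trans (hφ f).1 (hφ f).2
    nlinarith
  have hBψ : 0 < Bψ := by
    have h := le_trans (hψ f).1 (hψ f).2
    nlinarith
  -- key perturbation estimate on finite sums
  have key : ∀ s : Finset I, ∑ i ∈ s, ‖⟪f, φ i - ψ i⟫‖ ^ 2 ≤ (lam * ‖f‖) ^ 2 := by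
    intro s
    set E := ∑ i ∈ s, ‖⟪f, φ i - ψ i⟫‖ ^ 2 with hE
    have hE0 : 0 ≤ E := Finset.sum_nonneg fun i _ => sq_nonneg _
    set a : I → ℂ := fun i => (starRingEnd ℂ) ⟪f, φ i - ψ i⟫ with ha
    have h1 : (⟪f, ∑ i ∈ s, a i • (φ i - ψ i)⟫ : ℂ) = (E : ℂ) := by
      rw [inner_sum, hE]
      push_cast
      refine Finset.sum_congr rfl fun i _ => ?_
      rw [inner_smul_right, ha]
      exact RCLike.conj_mul _
    have hnorma : (∑ i ∈ s, ‖a i‖ ^ 2) = E := by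
      rw [hE]
      exact Finset.sum_congr rfl fun i _ => by rw [ha, RCLike.norm_conj]
    have h2 : E ≤ ‖f‖ * (lam * Real.sqrt E) :=
      calc E = ‖(⟪f, ∑ i ∈ s, a i • (φ i - ψ i)⟫ : ℂ)‖ := by
              rw [h1, Complex.norm_real, Real.norm_of_nonneg hE0]
        _ ≤ ‖f‖ * ‖∑ i ∈ s, a i • (φ i - ψ i)‖ := norm_inner_le_norm _ _
        _ ≤ ‖f‖ * (lam * Real.sqrt (∑ i ∈ s, ‖a i‖ ^ 2)) :=
              mul_le_mul_of_nonneg_left (happrox a s) (norm_nonneg f)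
        _ = ‖f‖ * (lam * Real.sqrt E) := by rw [hnorma]
    nlinarith [Real.sq_sqrt hE0, Real.sqrt_nonneg E, sq_nonneg (Real.sqrt E - lam * ‖f‖),
      mul_pos hlam0 hfn]
  -- upper bound and splitting
  have hsplitc := Summable.tsum_subtype_add_tsum_subtype_compl hsc σ
  have hsplitd := Summable.tsum_subtype_add_tsum_subtype_compl hsd σ
  have hnn1 : (0:ℝ) ≤ ∑' i : σ, ‖⟪f, φ i⟫‖ ^ 2 := tsum_nonneg fun i => sq_nonneg _
  have hnn2 : (0:ℝ) ≤ ∑' i : ↥σᶜ, ‖⟪f, φ i⟫‖ ^ 2 := tsum_nonneg fun i => sq_nonneg _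
  have hnn3 : (0:ℝ) ≤ ∑' i : σ, ‖⟪f, ψ i⟫‖ ^ 2 := tsum_nonneg fun i => sq_nonneg _
  have hnn4 : (0:ℝ) ≤ ∑' i : ↥σᶜ, ‖⟪f, ψ i⟫‖ ^ 2 := tsum_nonneg fun i => sq_nonneg _
  -- the difference estimate over σᶜ
  have hdiff : (∑' i : ↥σᶜ, ‖⟪f, φ i⟫‖ ^ 2) - (∑' i : ↥σᶜ, ‖⟪f, ψ i⟫‖ ^ 2)
      ≤ lam * (Real.sqrt Bφ + Real.sqrt Bψ) * ‖f‖ ^ 2 := by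
    have hsub : Summable (fun i : ↥σᶜ => ‖⟪f, φ i⟫‖ ^ 2 - ‖⟪f, ψ i⟫‖ ^ 2) :=
      (hsc.subtype σᶜ).sub (hsd.subtype σᶜ)
    have hts : (∑' i : ↥σᶜ, (‖⟪f, φ i⟫‖ ^ 2 - ‖⟪f, ψ i⟫‖ ^ 2))
        = (∑' i : ↥σᶜ, ‖⟪f, φ i⟫‖ ^ 2) - (∑' i : ↥σᶜ, ‖⟪f, ψ i⟫‖ ^ 2) :=
      Summable.tsum_sub (hsc.subtype σᶜ) (hsd.subtype σᶜ)
    rw [← hts]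
    refine Summable.tsum_le_of_sum_le hsub ?_
    intro s
    -- pointwise estimate
    have hpt : ∀ i : I, ‖⟪f, φ i⟫‖ ^ 2 - ‖⟪f, ψ i⟫‖ ^ 2
        ≤ ‖⟪f, φ i - ψ i⟫‖ * ‖⟪f, φ i⟫‖ + ‖⟪f, φ i - ψ i⟫‖ * ‖⟪f, ψ i⟫‖ := by
      intro i
      have h3 : ‖⟪f, φ i⟫‖ - ‖⟪f, ψ i⟫‖ ≤ ‖⟪f, φ i - ψ i⟫‖ := by
        rw [inner_sub_right]
        exact norm_sub_norm_le _ _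
      nlinarith [norm_nonneg (⟪f, φ i⟫ : ℂ), norm_nonneg (⟪f, ψ i⟫ : ℂ),
        norm_nonneg (⟪f, φ i - ψ i⟫ : ℂ)]
    -- sums over the image finset in I
    set t : Finset I := s.image (Subtype.val) with hti
    have hinj : ∀ x ∈ s, ∀ y ∈ s, (x : I) = (y : I) → x = y :=
      fun x _ y _ h => Subtype.val_injective h
    have he : ∑ i ∈ s, ‖⟪f, φ i.val - ψ i.val⟫‖ ^ 2 ≤ (lam * ‖f‖) ^ 2 := by
      have h := Finset.sum_image (f := fun i => ‖⟪f, φ i - ψ i⟫‖ ^ 2)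
        (g := Subtype.val) (s := s) hinj
      rw [← h]; exact key t
    have hcs : ∑ i ∈ s, ‖⟪f, φ i.val⟫‖ ^ 2 ≤ Bφ * ‖f‖ ^ 2 := by
      have h := Finset.sum_image (f := fun i => ‖⟪f, φ i⟫‖ ^ 2)
        (g := Subtype.val) (s := s) hinj
      rw [← h]
      exact le_trans (Summable.sum_le_tsum t (fun i _ => sq_nonneg _) hsc) (hφ f).2
    have hds : ∑ i ∈ s, ‖⟪f, ψ i.val⟫‖ ^ 2 ≤ Bψ * ‖f‖ ^ 2 := by
      have h := Finset.sum_image (f := fun i => ‖⟪f, ψ i⟫‖ ^ 2)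
        (g := Subtype.val) (s := s) hinj
      rw [← h]
      exact le_trans (Summable.sum_le_tsum t (fun i _ => sq_nonneg _) hsd) (hψ f).2
    have cs1 : ∑ i ∈ s, ‖⟪f, φ i.val - ψ i.val⟫‖ * ‖⟪f, φ i.val⟫‖
        ≤ (lam * ‖f‖) * (Real.sqrt Bφ * ‖f‖) := by
      refine le_trans (Real.sum_mul_le_sqrt_mul_sqrt s _ _) ?_
      have e1 : Real.sqrt (∑ i ∈ s, ‖⟪f, φ i.val - ψ i.val⟫‖ ^ 2) ≤ lam * ‖f‖ := by
        rw [show lam * ‖f‖ = Real.sqrt ((lam * ‖f‖) ^ 2) from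
          (Real.sqrt_sq (by positivity)).symm]
        exact Real.sqrt_le_sqrt he
      have e2 : Real.sqrt (∑ i ∈ s, ‖⟪f, φ i.val⟫‖ ^ 2) ≤ Real.sqrt Bφ * ‖f‖ := by
        rw [show Real.sqrt Bφ * ‖f‖ = Real.sqrt (Bφ * ‖f‖ ^ 2) by
          rw [Real.sqrt_mul hBφ.le, Real.sqrt_sq (norm_nonneg f)]]
        exact Real.sqrt_le_sqrt hcs
      exact mul_le_mul e1 e2 (Real.sqrt_nonneg _) (by positivity)
    have cs2 : ∑ i ∈ s, ‖⟪f, φ i.val - ψ i.val⟫‖ * ‖⟪f, ψ i.val⟫‖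
        ≤ (lam * ‖f‖) * (Real.sqrt Bψ * ‖f‖) := by
      refine le_trans (Real.sum_mul_le_sqrt_mul_sqrt s _ _) ?_
      have e1 : Real.sqrt (∑ i ∈ s, ‖⟪f, φ i.val - ψ i.val⟫‖ ^ 2) ≤ lam * ‖f‖ := by
        rw [show lam * ‖f‖ = Real.sqrt ((lam * ‖f‖) ^ 2) from
          (Real.sqrt_sq (by positivity)).symm]
        exact Real.sqrt_le_sqrt he
      have e2 : Real.sqrt (∑ i ∈ s, ‖⟪f, ψ i.val⟫‖ ^ 2) ≤ Real.sqrt Bψ * ‖f‖ := by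
        rw [show Real.sqrt Bψ * ‖f‖ = Real.sqrt (Bψ * ‖f‖ ^ 2) by
          rw [Real.sqrt_mul hBψ.le, Real.sqrt_sq (norm_nonneg f)]]
        exact Real.sqrt_le_sqrt hds
      exact mul_le_mul e1 e2 (Real.sqrt_nonneg _) (by positivity)
    calc ∑ i ∈ s, (‖⟪f, φ i.val⟫‖ ^ 2 - ‖⟪f, ψ i.val⟫‖ ^ 2)
        ≤ ∑ i ∈ s, (‖⟪f, φ i.val - ψ i.val⟫‖ * ‖⟪f, φ i.val⟫‖
            + ‖⟪f, φ i.val - ψ i.val⟫‖ * ‖⟪f, ψ i.val⟫‖) :=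
          Finset.sum_le_sum fun i _ => hpt i.val
      _ = (∑ i ∈ s, ‖⟪f, φ i.val - ψ i.val⟫‖ * ‖⟪f, φ i.val⟫‖)
            + ∑ i ∈ s, ‖⟪f, φ i.val - ψ i.val⟫‖ * ‖⟪f, ψ i.val⟫‖ :=
          Finset.sum_add_distrib
      _ ≤ (lam * ‖f‖) * (Real.sqrt Bφ * ‖f‖) + (lam * ‖f‖) * (Real.sqrt Bψ * ‖f‖) :=
          add_le_add cs1 cs2
      _ = lam * (Real.sqrt Bφ + Real.sqrt Bψ) * ‖f‖ ^ 2 := by ring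
  have hlam2 : lam * (Real.sqrt Bφ + Real.sqrt Bψ) * ‖f‖ ^ 2 ≤ Aφ / 2 * ‖f‖ ^ 2 :=
    mul_le_mul_of_nonneg_right hlam hfn2.le
  constructor
  · have h1 := (hφ f).1
    linarith [hsplitc, hdiff, hlam2]
  · have h2 := (hφ f).2
    have h3 := (hψ f).2
    linarith [hsplitc, hsplitd]
end

section
/- Let Φ={φ_i}_{i∈I} be a frame for H with bounds A_Φ, B_Φ, and let U be a bounded operator on H with ‖I−U‖² < A_Φ/B_Φ. Then Φ and UΦ={Uφ_i}_{i∈I} are woven with universal lower bound (√A_Φ − √B_Φ‖I−U‖)². -/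
open scoped ComplexInnerProductSpace

open scoped ENNReal

lemma memlp_two {α : Type*} {g : α → ℂ} (h : Summable fun i => ‖g i‖ ^ 2) :
    Memℓp g 2 := by
  apply memℓp_gen
  have h2 : ((2:ℝ≥0∞)).toReal = ((2:ℕ):ℝ) := by norm_num
  rw [h2]
  simpa [Real.rpow_natCast] using h

lemma lp_norm_sq {α : Type*} (f : lp (fun _ : α => ℂ) 2) :
    ‖f‖ ^ 2 = ∑' i, ‖f i‖ ^ 2 := by
  have h := lp.norm_rpow_eq_tsum (p := 2) (by norm_num) f
  have h2 : ((2:ℝ≥0∞)).toReal = ((2:ℕ):ℝ) := by norm_num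
  rw [h2] at h
  simpa [Real.rpow_natCast] using h

lemma tsum_subtype_le' {α : Type*} (h : α → ℝ) (hnn : ∀ i, 0 ≤ h i) (hs : Summable h)
    (s : Set α) : ∑' i : s, h i ≤ ∑' i, h i := by
  rw [tsum_subtype]
  exact Summable.tsum_le_tsum (fun i => Set.indicator_le_self' (fun x _ => hnn x) i)
    (hs.indicator s) hs


/-- Let `Φ` be a frame with bounds `A_Φ, B_Φ` and `U` a bounded operator
with `‖I − U‖² < A_Φ/B_Φ`. Then `Φ` and `UΦ` are woven with universal lower bound
`(√A_Φ − √B_Φ‖I − U‖)²`. -/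
theorem stmt2 {H : Type*} [NormedAddCommGroup H] [InnerProductSpace ℂ H] [CompleteSpace H]
    {I : Type*} [Countable I] (φ : I → H) (Aφ Bφ : ℝ) (hAφ : 0 < Aφ)
    (hφ : ∀ f : H, Aφ * ‖f‖ ^ 2 ≤ ∑' i : I, ‖⟪f, φ i⟫‖ ^ 2 ∧
      ∑' i : I, ‖⟪f, φ i⟫‖ ^ 2 ≤ Bφ * ‖f‖ ^ 2)
    (U : H →L[ℂ] H) (hU : ‖(1 : H →L[ℂ] H) - U‖ ^ 2 < Aφ / Bφ) :
    ∃ D : ℝ, ∀ (σ : Set I) (f : H),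
      (Real.sqrt Aφ - Real.sqrt Bφ * ‖(1 : H →L[ℂ] H) - U‖) ^ 2 * ‖f‖ ^ 2 ≤
        (∑' i : σ, ‖⟪f, φ i⟫‖ ^ 2) + (∑' i : ↥σᶜ, ‖⟪f, U (φ i)⟫‖ ^ 2) ∧
      (∑' i : σ, ‖⟪f, φ i⟫‖ ^ 2) + (∑' i : ↥σᶜ, ‖⟪f, U (φ i)⟫‖ ^ 2) ≤ D * ‖f‖ ^ 2 := by
  classical
  have hsum : ∀ g : H, Summable (fun i : I => ‖⟪g, φ i⟫‖ ^ 2) := by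
    intro g
    rcases eq_or_ne g 0 with rfl | hg
    · simpa [inner_zero_left] using summable_zero
    · by_contra h
      have h0 := (hφ g).1
      rw [tsum_eq_zero_of_not_summable h] at h0
      have hgp : 0 < ‖g‖ := norm_pos_iff.mpr hg
      nlinarith [mul_pos hAφ (pow_pos hgp 2)]
  refine ⟨Bφ * (1 + ‖U‖ ^ 2), fun σ f => ?_⟩
  rcases eq_or_ne f 0 with rfl | hf
  · simp [inner_zero_left]
  have hfpos : 0 < ‖f‖ := norm_pos_iff.mpr hf
  have hf2 : 0 < ‖f‖ ^ 2 := by positivity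
  have hB : 0 < Bφ := by nlinarith [(hφ f).1, (hφ f).2]
  set V : H →L[ℂ] H := (1 : H →L[ℂ] H) - U with hV
  set g : H := ContinuousLinearMap.adjoint V f with hg
  have hgφ : ∀ i, ⟪g, φ i⟫ = ⟪f, V (φ i)⟫ := fun i =>
    ContinuousLinearMap.adjoint_inner_left V (φ i) f
  have hgn : ‖g‖ ≤ ‖V‖ * ‖f‖ := by
    have h1 := (ContinuousLinearMap.adjoint V).le_opNorm f
    have h2 : ‖ContinuousLinearMap.adjoint V‖ = ‖V‖ :=
      LinearIsometryEquiv.norm_map _ V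
    rw [h2] at h1
    exact h1
  set a : I → ℂ := fun i => ⟪f, φ i⟫ with ha
  set d : I → ℂ := fun i => (σᶜ).indicator (fun j => ⟪g, φ j⟫) i with hd
  have hsa : Summable fun i => ‖a i‖ ^ 2 := hsum f
  have hsd : Summable fun i => ‖d i‖ ^ 2 := by
    refine Summable.of_nonneg_of_le (fun i => by positivity) (fun i => ?_) (hsum g)
    exact pow_le_pow_left₀ (norm_nonneg _) (norm_indicator_le_norm_self _ _) 2
  have hsc : Summable fun i => ‖a i - d i‖ ^ 2 := by
    refine Summable.of_nonneg_of_le (fun i => by positivity) (fun i => ?_)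
      ((hsa.mul_left 2).add (hsd.mul_left 2))
    have h1 := norm_sub_le (a i) (d i)
    nlinarith [sq_nonneg (‖a i‖ - ‖d i‖), norm_nonneg (a i - d i), norm_nonneg (a i),
      norm_nonneg (d i)]
  set A : lp (fun _ : I => ℂ) 2 := ⟨a, memlp_two hsa⟩ with hA
  set Dl : lp (fun _ : I => ℂ) 2 := ⟨d, memlp_two hsd⟩ with hD
  set C := A - Dl with hC
  have hCapp : ∀ i, (C : ∀ _ : I, ℂ) i = a i - d i := fun i => by
    rw [hC, lp.coeFn_sub]; rfl
  have hnC : ‖C‖ ^ 2 = ∑' i, ‖a i - d i‖ ^ 2 := by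
    rw [lp_norm_sq C]; exact tsum_congr fun i => by rw [hCapp i]
  have hnA2 : Aφ * ‖f‖ ^ 2 ≤ ‖A‖ ^ 2 := by
    rw [lp_norm_sq A]; exact (hφ f).1
  have hnD2 : ‖Dl‖ ^ 2 ≤ Bφ * (‖V‖ * ‖f‖) ^ 2 := by
    rw [lp_norm_sq Dl]
    have h1 : ∑' i, ‖d i‖ ^ 2 ≤ ∑' i, ‖⟪g, φ i⟫‖ ^ 2 := by
      refine Summable.tsum_le_tsum (fun i => ?_) hsd (hsum g)
      exact pow_le_pow_left₀ (norm_nonneg _) (norm_indicator_le_norm_self _ _) 2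
    have h2 := (hφ g).2
    have h3 : Bφ * ‖g‖ ^ 2 ≤ Bφ * (‖V‖ * ‖f‖) ^ 2 :=
      mul_le_mul_of_nonneg_left (pow_le_pow_left₀ (norm_nonneg g) hgn 2) hB.le
    linarith
  have hAn : Real.sqrt Aφ * ‖f‖ ≤ ‖A‖ := by
    have hsq : (Real.sqrt Aφ * ‖f‖) ^ 2 ≤ ‖A‖ ^ 2 := by
      rw [mul_pow, Real.sq_sqrt hAφ.le]; exact hnA2
    exact (pow_le_pow_iff_left₀ (by positivity) (norm_nonneg _) two_ne_zero).mp hsq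
  have hDn : ‖Dl‖ ≤ Real.sqrt Bφ * (‖V‖ * ‖f‖) := by
    have hsq : ‖Dl‖ ^ 2 ≤ (Real.sqrt Bφ * (‖V‖ * ‖f‖)) ^ 2 := by
      rw [mul_pow, Real.sq_sqrt hB.le]; exact hnD2
    exact (pow_le_pow_iff_left₀ (norm_nonneg _) (by positivity) two_ne_zero).mp hsq
  have htri : ‖A‖ - ‖Dl‖ ≤ ‖C‖ := by rw [hC]; exact norm_sub_norm_le A Dl
  have hBV : Real.sqrt Bφ * ‖V‖ ≤ Real.sqrt Aφ := by
    have h1 : Bφ * ‖V‖ ^ 2 ≤ Aφ := by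
      have := (lt_div_iff₀ hB).mp hU
      nlinarith
    calc Real.sqrt Bφ * ‖V‖ = Real.sqrt (Bφ * ‖V‖ ^ 2) := by
          rw [Real.sqrt_mul hB.le, Real.sqrt_sq (norm_nonneg _)]
      _ ≤ Real.sqrt Aφ := Real.sqrt_le_sqrt h1
  have ht0 : 0 ≤ Real.sqrt Aφ - Real.sqrt Bφ * ‖V‖ := sub_nonneg.mpr hBV
  have htf : (Real.sqrt Aφ - Real.sqrt Bφ * ‖V‖) * ‖f‖ ≤ ‖C‖ := by
    have hexp : (Real.sqrt Aφ - Real.sqrt Bφ * ‖V‖) * ‖f‖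
        = Real.sqrt Aφ * ‖f‖ - Real.sqrt Bφ * (‖V‖ * ‖f‖) := by ring
    linarith
  have hmain : (Real.sqrt Aφ - Real.sqrt Bφ * ‖V‖) ^ 2 * ‖f‖ ^ 2 ≤ ‖C‖ ^ 2 := by
    have h1 : ((Real.sqrt Aφ - Real.sqrt Bφ * ‖V‖) * ‖f‖) ^ 2 ≤ ‖C‖ ^ 2 :=
      pow_le_pow_left₀ (by positivity) htf 2
    calc (Real.sqrt Aφ - Real.sqrt Bφ * ‖V‖) ^ 2 * ‖f‖ ^ 2
        = ((Real.sqrt Aφ - Real.sqrt Bφ * ‖V‖) * ‖f‖) ^ 2 := by ring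
      _ ≤ ‖C‖ ^ 2 := h1
  have hsplit : (∑' i : σ, ‖⟪f, φ i⟫‖ ^ 2) + (∑' i : ↥σᶜ, ‖⟪f, U (φ i)⟫‖ ^ 2)
      = ∑' i, ‖a i - d i‖ ^ 2 := by
    have hfull := hsc.tsum_subtype_add_tsum_subtype_compl σ
    have e1 : (∑' i : σ, ‖⟪f, φ i⟫‖ ^ 2) = ∑' i : σ, ‖a ↑i - d ↑i‖ ^ 2 := by
      refine tsum_congr fun i => ?_
      have hi : (i : I) ∉ σᶜ := by simpa using i.2
      simp [hd, Set.indicator_of_notMem hi, ha]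
    have e2 : (∑' i : ↥σᶜ, ‖⟪f, U (φ i)⟫‖ ^ 2) = ∑' i : ↥σᶜ, ‖a ↑i - d ↑i‖ ^ 2 := by
      refine tsum_congr fun i => ?_
      have hi : (i : I) ∈ σᶜ := i.2
      have key : a ↑i - d ↑i = ⟪f, U (φ ↑i)⟫ := by
        simp only [ha, hd, Set.indicator_of_mem hi, hgφ, hV,
          ContinuousLinearMap.sub_apply, ContinuousLinearMap.one_apply, inner_sub_right]
        ring
      rw [key]
    rw [e1, e2, hfull]
  constructor
  · rw [hsplit, ← hnC]; exact hmain
  · have h1 : (∑' i : σ, ‖⟪f, φ i⟫‖ ^ 2) ≤ Bφ * ‖f‖ ^ 2 :=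
      le_trans (tsum_subtype_le' _ (fun i => by positivity) (hsum f) σ) (hφ f).2
    have h2 : (∑' i : ↥σᶜ, ‖⟪f, U (φ i)⟫‖ ^ 2) ≤ Bφ * ‖U‖ ^ 2 * ‖f‖ ^ 2 := by
      have he : ∀ i : ↥σᶜ, ⟪f, U (φ i)⟫ = ⟪ContinuousLinearMap.adjoint U f, φ ↑i⟫ :=
        fun i => (ContinuousLinearMap.adjoint_inner_left U (φ ↑i) f).symm
      obtain ⟨u, hu⟩ : ∃ u : H, u = ContinuousLinearMap.adjoint U f := ⟨_, rfl⟩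
      have hUn : ‖u‖ ≤ ‖U‖ * ‖f‖ := by
        rw [hu]
        have h1 := (ContinuousLinearMap.adjoint U).le_opNorm f
        rwa [LinearIsometryEquiv.norm_map _ U] at h1
      calc (∑' i : ↥σᶜ, ‖⟪f, U (φ i)⟫‖ ^ 2)
          = ∑' i : ↥σᶜ, ‖⟪u, φ ↑i⟫‖ ^ 2 :=
            tsum_congr fun i => by rw [he i, ← hu]
        _ ≤ ∑' i, ‖⟪u, φ i⟫‖ ^ 2 :=
            tsum_subtype_le' (fun i => ‖⟪u, φ i⟫‖ ^ 2) (fun i => by positivity) (hsum u) σᶜ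
        _ ≤ Bφ * ‖u‖ ^ 2 := (hφ u).2
        _ ≤ Bφ * ‖U‖ ^ 2 * ‖f‖ ^ 2 := by
            have h2 : ‖u‖ ^ 2 ≤ (‖U‖ * ‖f‖) ^ 2 := pow_le_pow_left₀ (norm_nonneg u) hUn 2
            calc Bφ * ‖u‖ ^ 2 ≤ Bφ * (‖U‖ * ‖f‖) ^ 2 := mul_le_mul_of_nonneg_left h2 hB.le
              _ = Bφ * ‖U‖ ^ 2 * ‖f‖ ^ 2 := by ring
    have hDexp : Bφ * (1 + ‖U‖ ^ 2) * ‖f‖ ^ 2 = Bφ * ‖f‖ ^ 2 + Bφ * ‖U‖ ^ 2 * ‖f‖ ^ 2 := by ring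
    linarith
end

section
/- Let {φ_i}_{i∈I}, {ψ_i}_{i∈I}, {η_i}_{i∈I} be frames for H. Suppose {φ_i} and {ψ_i} are woven with universal lower bound A₁, {ψ_i} and {η_i} are woven with universal lower bound A₂, and A₁+A₂−B_Ψ > 0, where B_Ψ is an upper frame bound of {ψ_i}. Then {φ_i} and {η_i} are woven, with universal lower bound A₁+A₂−B_Ψ. -/
open scoped ComplexInnerProductSpace

/-- If `Φ`, `Ψ` are woven with universal lower bound `A₁`, `Ψ`, `η` are
woven with universal lower bound `A₂`, and `A₁ + A₂ − B_Ψ > 0` for an upper frame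
bound `B_Ψ` of `Ψ`, then `Φ` and `η` are woven with universal lower bound
`A₁ + A₂ − B_Ψ`. -/
theorem stmt4 {H : Type*} [NormedAddCommGroup H] [InnerProductSpace ℂ H] [CompleteSpace H]
    {I : Type*} [Countable I] (φ ψ η : I → H) (A₁ B₁ A₂ B₂ Bψ : ℝ)
    (hψ : ∀ f : H, ∑' i : I, ‖⟪f, ψ i⟫‖ ^ 2 ≤ Bψ * ‖f‖ ^ 2)
    (h₁ : ∀ (σ : Set I) (f : H),
      A₁ * ‖f‖ ^ 2 ≤ (∑' i : σ, ‖⟪f, φ i⟫‖ ^ 2) + ∑' i : ↥σᶜ, ‖⟪f, ψ i⟫‖ ^ 2 ∧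
      (∑' i : σ, ‖⟪f, φ i⟫‖ ^ 2) + (∑' i : ↥σᶜ, ‖⟪f, ψ i⟫‖ ^ 2) ≤ B₁ * ‖f‖ ^ 2)
    (h₂ : ∀ (σ : Set I) (f : H),
      A₂ * ‖f‖ ^ 2 ≤ (∑' i : σ, ‖⟪f, ψ i⟫‖ ^ 2) + ∑' i : ↥σᶜ, ‖⟪f, η i⟫‖ ^ 2 ∧
      (∑' i : σ, ‖⟪f, ψ i⟫‖ ^ 2) + (∑' i : ↥σᶜ, ‖⟪f, η i⟫‖ ^ 2) ≤ B₂ * ‖f‖ ^ 2)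
    (hpos : 0 < A₁ + A₂ - Bψ) :
    ∃ B : ℝ, ∀ (σ : Set I) (f : H),
      (A₁ + A₂ - Bψ) * ‖f‖ ^ 2 ≤ (∑' i : σ, ‖⟪f, φ i⟫‖ ^ 2) + ∑' i : ↥σᶜ, ‖⟪f, η i⟫‖ ^ 2 ∧
      (∑' i : σ, ‖⟪f, φ i⟫‖ ^ 2) + (∑' i : ↥σᶜ, ‖⟪f, η i⟫‖ ^ 2) ≤ B * ‖f‖ ^ 2 := by
  refine ⟨B₁ + B₂, fun σ f => ?_⟩
  -- summability of the ψ-family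
  have hnn : ∀ i : I, 0 ≤ ‖⟪f, ψ i⟫‖ ^ 2 := fun i => by positivity
  have hsum : Summable fun i : I => ‖⟪f, ψ i⟫‖ ^ 2 := by
    apply summable_of_sum_le (c := B₂ * ‖f‖ ^ 2) hnn
    intro u
    have h := (h₂ (↑u : Set I) f).2
    have h1 : (∑' i : (↑u : Set I), ‖⟪f, ψ i⟫‖ ^ 2) = ∑ i ∈ u, ‖⟪f, ψ i⟫‖ ^ 2 :=
      Finset.tsum_subtype' u (fun i => ‖⟪f, ψ i⟫‖ ^ 2)
    have h2 : (0:ℝ) ≤ ∑' i : ↥(↑u : Set I)ᶜ, ‖⟪f, η i⟫‖ ^ 2 :=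
      tsum_nonneg fun i => by positivity
    linarith
  have hsplit : (∑' i : σ, ‖⟪f, ψ i⟫‖ ^ 2) + (∑' i : ↥σᶜ, ‖⟪f, ψ i⟫‖ ^ 2)
      = ∑' i : I, ‖⟪f, ψ i⟫‖ ^ 2 :=
    Summable.tsum_add_tsum_compl (hsum.subtype σ) (hsum.subtype σᶜ)
  have hb := hψ f
  have l1 := (h₁ σ f).1
  have u1 := (h₁ σ f).2
  have l2 := (h₂ σ f).1
  have u2 := (h₂ σ f).2
  have nφ : (0:ℝ) ≤ ∑' i : σ, ‖⟪f, φ i⟫‖ ^ 2 := tsum_nonneg fun i => by positivity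
  have nη : (0:ℝ) ≤ ∑' i : ↥σᶜ, ‖⟪f, η i⟫‖ ^ 2 := tsum_nonneg fun i => by positivity
  have nψ1 : (0:ℝ) ≤ ∑' i : σ, ‖⟪f, ψ i⟫‖ ^ 2 := tsum_nonneg fun i => by positivity
  have nψ2 : (0:ℝ) ≤ ∑' i : ↥σᶜ, ‖⟪f, ψ i⟫‖ ^ 2 := tsum_nonneg fun i => by positivity
  constructor
  · nlinarith [l1, l2, hsplit, hb]
  · nlinarith [u1, u2, nψ1, nψ2]
end

section
/- Let Φ={φ_i}_{i∈I} be a frame with bounds A_Φ, B_Φ and frame operator S_Φ. If ‖I − S_Φ^{-1}‖ ≤ A_Φ / (2(B_Φ + √(B_Φ/A_Φ))), then Φ and its canonical dual Φ̃ = {S_Φ^{-1}φ_i}_{i∈I} are woven. -/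
open scoped ComplexInnerProductSpace

set_option maxHeartbeats 1600000 in
/-- If `Φ` is a frame with bounds `A_Φ, B_Φ` and frame operator `S_Φ`
satisfying `‖I − S_Φ⁻¹‖ ≤ A_Φ / (2(B_Φ + √(B_Φ/A_Φ)))`, then `Φ` and its canonical
dual `{S_Φ⁻¹ φ_i}` are woven. -/
theorem stmt9 {H : Type*} [NormedAddCommGroup H] [InnerProductSpace ℂ H] [CompleteSpace H]
    {I : Type*} [Countable I] (φ : I → H) (Aφ Bφ : ℝ) (hAφ : 0 < Aφ)
    (hφ : ∀ f : H, Aφ * ‖f‖ ^ 2 ≤ ∑' i : I, ‖⟪f, φ i⟫‖ ^ 2 ∧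
      ∑' i : I, ‖⟪f, φ i⟫‖ ^ 2 ≤ Bφ * ‖f‖ ^ 2)
    (S Sinv : H →L[ℂ] H)
    (hS : ∀ f : H, HasSum (fun i : I => ⟪f, φ i⟫ • φ i) (S f))
    (hinv₁ : ∀ f : H, Sinv (S f) = f) (hinv₂ : ∀ f : H, S (Sinv f) = f)
    (hnorm : ‖(1 : H →L[ℂ] H) - Sinv‖ ≤ Aφ / (2 * (Bφ + Real.sqrt (Bφ / Aφ)))) :
    ∃ C D : ℝ, 0 < C ∧ ∀ (σ : Set I) (f : H),
      C * ‖f‖ ^ 2 ≤ (∑' i : σ, ‖⟪f, φ i⟫‖ ^ 2) + ∑' i : ↥σᶜ, ‖⟪f, Sinv (φ i)⟫‖ ^ 2 ∧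
      (∑' i : σ, ‖⟪f, φ i⟫‖ ^ 2) + (∑' i : ↥σᶜ, ‖⟪f, Sinv (φ i)⟫‖ ^ 2) ≤ D * ‖f‖ ^ 2 := by
  rcases subsingleton_or_nontrivial H with hH | hH
  · refine ⟨1, 1, one_pos, fun σ f => ?_⟩
    have hf : f = 0 := Subsingleton.elim f 0
    subst hf
    simp
  -- nontrivial case
  obtain ⟨f₀, hf₀⟩ := exists_ne (0 : H)
  have hf₀n : (0:ℝ) < ‖f₀‖ ^ 2 := pow_pos (norm_pos_iff.mpr hf₀) 2
  have hAB : Aφ ≤ Bφ := by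
    have h1 := (hφ f₀).1
    have h2 := (hφ f₀).2
    nlinarith
  have hB : 0 < Bφ := lt_of_lt_of_le hAφ hAB
  set r : ℝ := Real.sqrt (Bφ / Aφ) with hr_def
  have hr : 0 ≤ r := Real.sqrt_nonneg _
  have hden : (0:ℝ) < 2 * (Bφ + r) := by nlinarith
  set ε : ℝ := Aφ / (2 * (Bφ + r)) with hε_def
  have hε : 0 < ε := div_pos hAφ hden
  have hε2 : ε ^ 2 * (2 * Bφ) < Aφ := by
    have h4 : (0:ℝ) < (2 * (Bφ + r)) ^ 2 := pow_pos hden 2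
    rw [hε_def, div_pow, div_mul_eq_mul_div, div_lt_iff₀ h4]
    nlinarith [mul_pos hAφ hB, mul_nonneg (mul_nonneg hAφ.le hB.le) hr,
      mul_nonneg hAφ.le (sq_nonneg r), mul_nonneg (mul_nonneg hAφ.le hB.le) (sub_nonneg.mpr hAB),
      mul_pos (mul_pos hAφ hB) hB]
  -- summability
  have hsum : ∀ f : H, Summable (fun i : I => ‖⟪f, φ i⟫‖ ^ 2) := by
    intro f
    rcases eq_or_ne f 0 with rfl | hf
    · simpa using summable_zero
    · by_contra h
      have h1 := (hφ f).1
      rw [tsum_eq_zero_of_not_summable h] at h1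
      nlinarith [pow_pos (norm_pos_iff.mpr hf) 2]
  set T : H →L[ℂ] H := ContinuousLinearMap.adjoint Sinv with hT_def
  have hTadj : ∀ (f : H) (i : I), ⟪f, Sinv (φ i)⟫ = ⟪T f, φ i⟫ := fun f i =>
    (ContinuousLinearMap.adjoint_inner_left Sinv (φ i) f).symm
  have hTnorm : ‖(1 : H →L[ℂ] H) - T‖ ≤ ε := by
    have h1 : (1 : H →L[ℂ] H) - T = ContinuousLinearMap.adjoint ((1 : H →L[ℂ] H) - Sinv) := by
      rw [map_sub, hT_def]
      congr 1
      rw [ContinuousLinearMap.one_def, ContinuousLinearMap.adjoint_id]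
    rw [h1, LinearIsometryEquiv.norm_map]
    exact hnorm
  refine ⟨Aφ / 2 - Bφ * ε ^ 2, Bφ + Bφ * ‖Sinv‖ ^ 2, by nlinarith, fun σ f => ?_⟩
  set g : H := T f with hg_def
  have hfg : ‖f - g‖ ≤ ε * ‖f‖ := by
    have h1 : f - g = ((1 : H →L[ℂ] H) - T) f := by
      simp [hg_def]
    rw [h1]
    calc ‖((1 : H →L[ℂ] H) - T) f‖ ≤ ‖(1 : H →L[ℂ] H) - T‖ * ‖f‖ :=
          ContinuousLinearMap.le_opNorm _ _
      _ ≤ ε * ‖f‖ := by gcongr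
  have hfg2 : ‖f - g‖ ^ 2 ≤ ε ^ 2 * ‖f‖ ^ 2 := by
    rw [← mul_pow]
    exact pow_le_pow_left₀ (norm_nonneg _) hfg 2
  have hgnorm : ‖g‖ ≤ ‖Sinv‖ * ‖f‖ := by
    have := ContinuousLinearMap.le_opNorm T f
    rwa [show ‖T‖ = ‖Sinv‖ from LinearIsometryEquiv.norm_map _ _] at this
  have hgnorm2 : ‖g‖ ^ 2 ≤ ‖Sinv‖ ^ 2 * ‖f‖ ^ 2 := by
    rw [← mul_pow]
    exact pow_le_pow_left₀ (norm_nonneg _) hgnorm 2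
  -- rewrite the dual sum
  have hrw : (∑' i : ↥σᶜ, ‖⟪f, Sinv (φ i)⟫‖ ^ 2) = ∑' i : ↥σᶜ, ‖⟪g, φ i⟫‖ ^ 2 :=
    tsum_congr fun i => by rw [hTadj f i]
  have hSf := hsum f
  have hSg := hsum g
  have hSd := hsum (f - g)
  have hSfσ : Summable (fun i : σ => ‖⟪f, φ (i : I)⟫‖ ^ 2) := hSf.subtype σ
  have hSfc : Summable (fun i : ↥σᶜ => ‖⟪f, φ (i : I)⟫‖ ^ 2) := hSf.subtype σᶜ
  have hSgc : Summable (fun i : ↥σᶜ => ‖⟪g, φ (i : I)⟫‖ ^ 2) := hSg.subtype σᶜ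
  have hSdc : Summable (fun i : ↥σᶜ => ‖⟪f - g, φ (i : I)⟫‖ ^ 2) := hSd.subtype σᶜ
  -- pieces
  have hσf_le : (∑' i : σ, ‖⟪f, φ i⟫‖ ^ 2) ≤ ∑' i : I, ‖⟪f, φ i⟫‖ ^ 2 :=
    Summable.tsum_subtype_le _ _ (fun a => by positivity) hSf
  have hσg_le : (∑' i : ↥σᶜ, ‖⟪g, φ i⟫‖ ^ 2) ≤ ∑' i : I, ‖⟪g, φ i⟫‖ ^ 2 :=
    Summable.tsum_subtype_le _ _ (fun a => by positivity) hSg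
  have hσd_le : (∑' i : ↥σᶜ, ‖⟪f - g, φ i⟫‖ ^ 2) ≤ ∑' i : I, ‖⟪f - g, φ i⟫‖ ^ 2 :=
    Summable.tsum_subtype_le _ _ (fun a => by positivity) hSd
  have hsplit : (∑' i : σ, ‖⟪f, φ i⟫‖ ^ 2) + (∑' i : ↥σᶜ, ‖⟪f, φ i⟫‖ ^ 2)
      = ∑' i : I, ‖⟪f, φ i⟫‖ ^ 2 :=
    Summable.tsum_add_tsum_compl (f := fun i : I => ‖⟪f, φ i⟫‖ ^ 2) (hSf.subtype σ) (hSf.subtype σᶜ)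
  -- pointwise comparison on σᶜ
  have hpt : ∀ i : ↥σᶜ, ‖⟪f, φ (i : I)⟫‖ ^ 2
      ≤ 2 * ‖⟪g, φ (i : I)⟫‖ ^ 2 + 2 * ‖⟪f - g, φ (i : I)⟫‖ ^ 2 := by
    intro i
    have h1 : ⟪f, φ (i : I)⟫ = ⟪g, φ (i : I)⟫ + ⟪f - g, φ (i : I)⟫ := by
      rw [inner_sub_left]; ring
    have h2 : ‖⟪f, φ (i : I)⟫‖ ≤ ‖⟪g, φ (i : I)⟫‖ + ‖⟪f - g, φ (i : I)⟫‖ := by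
      rw [h1]; exact norm_add_le _ _
    nlinarith [norm_nonneg (⟪g, φ (i : I)⟫), norm_nonneg (⟪f - g, φ (i : I)⟫),
      norm_nonneg (⟪f, φ (i : I)⟫), sq_nonneg (‖⟪g, φ (i : I)⟫‖ - ‖⟪f - g, φ (i : I)⟫‖)]
  have hcmp : (∑' i : ↥σᶜ, ‖⟪f, φ i⟫‖ ^ 2)
      ≤ 2 * (∑' i : ↥σᶜ, ‖⟪g, φ i⟫‖ ^ 2) + 2 * (∑' i : ↥σᶜ, ‖⟪f - g, φ i⟫‖ ^ 2) := by
    have h1 : Summable (fun i : ↥σᶜ => 2 * ‖⟪g, φ (i : I)⟫‖ ^ 2 + 2 * ‖⟪f - g, φ (i : I)⟫‖ ^ 2) :=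
      (hSgc.mul_left 2).add (hSdc.mul_left 2)
    calc (∑' i : ↥σᶜ, ‖⟪f, φ i⟫‖ ^ 2)
        ≤ ∑' i : ↥σᶜ, (2 * ‖⟪g, φ (i : I)⟫‖ ^ 2 + 2 * ‖⟪f - g, φ (i : I)⟫‖ ^ 2) :=
          Summable.tsum_le_tsum hpt hSfc h1
      _ = 2 * (∑' i : ↥σᶜ, ‖⟪g, φ i⟫‖ ^ 2) + 2 * (∑' i : ↥σᶜ, ‖⟪f - g, φ i⟫‖ ^ 2) := by
          rw [Summable.tsum_add (hSgc.mul_left 2) (hSdc.mul_left 2), tsum_mul_left, tsum_mul_left]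
  have hlow := (hφ f).1
  have hupf := (hφ f).2
  have hupg := (hφ g).2
  have hupd := (hφ (f - g)).2
  have hσf_nonneg : 0 ≤ (∑' i : σ, ‖⟪f, φ i⟫‖ ^ 2) := tsum_nonneg fun i => by positivity
  have hσg_nonneg : 0 ≤ (∑' i : ↥σᶜ, ‖⟪g, φ i⟫‖ ^ 2) := tsum_nonneg fun i => by positivity
  constructor
  · rw [hrw]
    linarith [hσd_le, hsplit, hcmp, hlow, hupd,
      mul_le_mul_of_nonneg_left hfg2 hB.le, hσf_nonneg, hσg_nonneg]
  · rw [hrw]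
    linarith [hσf_le, hσg_le, hupf, hupg, mul_le_mul_of_nonneg_left hgnorm2 hB.le]
end

section
/- Riesz bases Φ={e₁,e₂} and Ψ={e₁+e₂, 2e₁+e₂} in ℝ² are Riesz woven (every mixed family {φ_i}_{i∈σ}∪{ψ_i}_{i∈σ^c} is a Riesz basis of ℝ²), but their canonical Parseval frames are {e₁,e₂} and {e₂,e₁}, which are not woven (the weaving with σ={1} is {e₁, e₁}, which does not span ℝ²). -/
open scoped RealInnerProductSpace


lemma pair_basis (u v : EuclideanSpace ℝ (Fin 2)) (h : u 0 * v 1 - u 1 * v 0 ≠ 0) :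
    LinearIndependent ℝ ![u, v] ∧ Submodule.span ℝ (Set.range ![u, v]) = ⊤ := by
  constructor
  · rw [LinearIndependent.pair_iff]
    intro s t hst
    have h0 : s * u 0 + t * v 0 = 0 := by have := congrArg (fun w : EuclideanSpace ℝ (Fin 2) => w 0) hst; simpa using this
    have h1 : s * u 1 + t * v 1 = 0 := by have := congrArg (fun w : EuclideanSpace ℝ (Fin 2) => w 1) hst; simpa using this
    have hs : s * (u 0 * v 1 - u 1 * v 0) = 0 := by linear_combination v 1 * h0 - v 0 * h1
    have ht : t * (u 0 * v 1 - u 1 * v 0) = 0 := by linear_combination u 0 * h1 - u 1 * h0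
    exact ⟨by rcases mul_eq_zero.1 hs with h'|h'; exact h'; exact absurd h' h,
           by rcases mul_eq_zero.1 ht with h'|h'; exact h'; exact absurd h' h⟩
  · rw [Submodule.eq_top_iff']
    intro w
    set d := u 0 * v 1 - u 1 * v 0 with hd
    have hw : w = ((w 0 * v 1 - w 1 * v 0) / d) • u + ((u 0 * w 1 - u 1 * w 0) / d) • v := by
      ext i
      fin_cases i <;> · simp [PiLp.add_apply, PiLp.smul_apply, smul_eq_mul]
                        field_simp
                        ring
    rw [hw]
    have hu : u ∈ Submodule.span ℝ (Set.range ![u, v]) :=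
      Submodule.subset_span ⟨0, rfl⟩
    have hv : v ∈ Submodule.span ℝ (Set.range ![u, v]) :=
      Submodule.subset_span ⟨1, rfl⟩
    exact Submodule.add_mem _ (Submodule.smul_mem _ _ hu) (Submodule.smul_mem _ _ hv)

lemma inner_e0 (v : EuclideanSpace ℝ (Fin 2)) :
    ⟪v, (EuclideanSpace.single 0 1 : EuclideanSpace ℝ (Fin 2))⟫ = v 0 := by
  simp [PiLp.inner_apply, Fin.sum_univ_two, EuclideanSpace.single_apply]

lemma inner_e1 (v : EuclideanSpace ℝ (Fin 2)) :
    ⟪v, (EuclideanSpace.single 1 1 : EuclideanSpace ℝ (Fin 2))⟫ = v 1 := by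
  simp [PiLp.inner_apply, Fin.sum_univ_two, EuclideanSpace.single_apply]

set_option maxHeartbeats 1000000 in
lemma qpart (Q : EuclideanSpace ℝ (Fin 2) →L[ℝ] EuclideanSpace ℝ (Fin 2))
    (hQ : IsSelfAdjoint Q) (hpos : ∀ f, 0 ≤ ⟪Q f, f⟫)
    (hinv : ∀ f : EuclideanSpace ℝ (Fin 2),
      Q (Q (((⟪f, (EuclideanSpace.single 0 1 : EuclideanSpace ℝ (Fin 2)) + EuclideanSpace.single 1 1⟫) •
          ((EuclideanSpace.single 0 1 : EuclideanSpace ℝ (Fin 2)) + EuclideanSpace.single 1 1)) +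
        (⟪f, (2:ℝ) • (EuclideanSpace.single 0 1 : EuclideanSpace ℝ (Fin 2)) + EuclideanSpace.single 1 1⟫) •
          ((2:ℝ) • (EuclideanSpace.single 0 1 : EuclideanSpace ℝ (Fin 2)) + EuclideanSpace.single 1 1))) = f) :
    Q ((EuclideanSpace.single 0 1 : EuclideanSpace ℝ (Fin 2)) + EuclideanSpace.single 1 1) = EuclideanSpace.single 1 1 ∧
    Q ((2:ℝ) • (EuclideanSpace.single 0 1 : EuclideanSpace ℝ (Fin 2)) + EuclideanSpace.single 1 1) = EuclideanSpace.single 0 1 := by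
  have hsym := (ContinuousLinearMap.isSelfAdjoint_iff_isSymmetric).1 hQ
  set E0 : EuclideanSpace ℝ (Fin 2) := EuclideanSpace.single 0 1 with hE0
  set E1 : EuclideanSpace ℝ (Fin 2) := EuclideanSpace.single 1 1 with hE1
  set a : ℝ := Q E0 0 with ha
  set b : ℝ := Q E0 1 with hb
  set c : ℝ := Q E1 1 with hc
  have hE00 : E0 0 = 1 := by simp [hE0, EuclideanSpace.single_apply]
  have hE01 : E0 1 = 0 := by simp [hE0, EuclideanSpace.single_apply]
  have hE10 : E1 0 = 0 := by simp [hE1, EuclideanSpace.single_apply]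
  have hE11 : E1 1 = 1 := by simp [hE1, EuclideanSpace.single_apply]
  have hbb : Q E1 0 = b := by
    have h := hsym E0 E1
    rw [inner_e1, real_inner_comm, inner_e0] at h
    exact h.symm
  have hexp : ∀ w : EuclideanSpace ℝ (Fin 2), w = w 0 • E0 + w 1 • E1 := by
    intro w; ext i; fin_cases i <;>
      simp [hE0, hE1, EuclideanSpace.single_apply]
  have hQ0 : ∀ w : EuclideanSpace ℝ (Fin 2), Q w 0 = a * w 0 + b * w 1 := by
    intro w
    conv_lhs => rw [hexp w]
    simp [map_add, map_smul, hbb, mul_comm]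
    exact Or.inl ha.symm
  have hQ1 : ∀ w : EuclideanSpace ℝ (Fin 2), Q w 1 = b * w 0 + c * w 1 := by
    intro w
    conv_lhs => rw [hexp w]
    simp [map_add, map_smul, mul_comm]
    rw [← hb, ← hc]
  -- inner products with ψ's
  have hinnerA : ∀ f : EuclideanSpace ℝ (Fin 2), ⟪f, E0 + E1⟫ = f 0 + f 1 := by
    intro f
    simp [PiLp.inner_apply, Fin.sum_univ_two, hE0, hE1, EuclideanSpace.single_apply]
  have hinnerB : ∀ f : EuclideanSpace ℝ (Fin 2), ⟪f, (2:ℝ) • E0 + E1⟫ = 2 * f 0 + f 1 := by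
    intro f
    simp [PiLp.inner_apply, Fin.sum_univ_two, hE0, hE1, EuclideanSpace.single_apply]
  -- coordinates of the frame-operator image
  have hS0 : ∀ f : EuclideanSpace ℝ (Fin 2),
      ((⟪f, E0 + E1⟫) • (E0 + E1) + (⟪f, (2:ℝ) • E0 + E1⟫) • ((2:ℝ) • E0 + E1)) 0
        = 5 * f 0 + 3 * f 1 := by
    intro f
    rw [hinnerA, hinnerB]
    simp [hE00, hE01, hE10, hE11]
    ring
  have hS1 : ∀ f : EuclideanSpace ℝ (Fin 2),
      ((⟪f, E0 + E1⟫) • (E0 + E1) + (⟪f, (2:ℝ) • E0 + E1⟫) • ((2:ℝ) • E0 + E1)) 1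
        = 3 * f 0 + 2 * f 1 := by
    intro f
    rw [hinnerA, hinnerB]
    simp [hE00, hE01, hE10, hE11]
    ring
  -- the four scalar equations
  have eqa := congrArg (fun v : EuclideanSpace ℝ (Fin 2) => v 0) (hinv E0)
  have eqb := congrArg (fun v : EuclideanSpace ℝ (Fin 2) => v 1) (hinv E0)
  have eqc := congrArg (fun v : EuclideanSpace ℝ (Fin 2) => v 0) (hinv E1)
  have eqd := congrArg (fun v : EuclideanSpace ℝ (Fin 2) => v 1) (hinv E1)
  simp only [hQ0, hQ1, hS0, hS1, hE00, hE01, hE10, hE11] at eqa eqb eqc eqd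
  norm_num at eqa eqb eqc eqd
  -- the quadratic relations: Q² = S⁻¹
  have hA : a^2 + b^2 = 2 := by linear_combination 2*eqa - 3*eqc
  have hB : a*b + b*c = -3 := by linear_combination -3*eqa + 5*eqc
  have hC : b^2 + c^2 = 5 := by linear_combination (1/2)*eqd + (9/2)*eqa - (15/2)*eqc
  -- positivity facts
  have hapos : 0 ≤ a := by
    have h := hpos E0
    rw [inner_e0] at h
    simpa [hQ0, hE00, hE01] using h
  have hcpos : 0 ≤ c := by
    have h := hpos E1
    rw [inner_e1] at h
    simpa [hQ1, hE10, hE11] using h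
  have hfpos : 0 ≤ 9*a + 6*b + c := by
    have h := hpos ((3:ℝ) • E0 + E1)
    have hf0 : ((3:ℝ) • E0 + E1) 0 = 3 := by simp [hE00, hE10]
    have hf1 : ((3:ℝ) • E0 + E1) 1 = 1 := by simp [hE01, hE11]
    rw [PiLp.inner_apply] at h
    simp only [RCLike.inner_apply, conj_trivial, Fin.sum_univ_two, hQ0, hQ1, hf0, hf1] at h
    nlinarith [h]
  -- solve: a + c ≠ 0, hence c = a - b
  have hs0 : a + c ≠ 0 := by
    intro h
    have : (0:ℝ) = -3 := by linear_combination hB - b * h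
    norm_num at this
  have hcab : c = a - b := by
    have h : (c - a + b) * (a + c) = 0 := by linear_combination hC - hA + hB
    rcases mul_eq_zero.1 h with h' | h'
    · linarith
    · exact absurd h' hs0
  have hb2 : b^2 - 2*(a*b) = 3 := by
    rw [hcab] at hC; linarith [hC]; 
  have hfact : (a + b) * (3*a + b) = 0 := by linear_combination 3*hA - 2*hb2
  have habc : a = 1 ∧ b = -1 ∧ c = 2 := by
    rcases mul_eq_zero.1 hfact with h' | h'
    · have hb' : b = -a := by linarith
      have : a^2 = 1 := by rw [hb'] at hA; nlinarith [hA]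
      have ha1 : a = 1 := by nlinarith [this, hapos]
      refine ⟨ha1, by rw [hb', ha1], by rw [hcab, hb', ha1]; ring⟩
    · exfalso
      have hb' : b = -3*a := by linarith
      have h2a : 0 ≤ -a := by
        have := hfpos
        rw [hcab, hb'] at this; linarith
      have ha0 : a = 0 := le_antisymm (by linarith) hapos
      rw [hb', ha0] at hA; norm_num at hA
  obtain ⟨ha1, hb1, hc1⟩ := habc
  constructor <;> · ext i
                    fin_cases i <;>
                      · simp [hQ0, hQ1, ha1, hb1, hc1, hE00, hE01, hE10, hE11,
                          EuclideanSpace.single_apply, hE0, hE1]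
                        try norm_num

/-- The Riesz bases `Φ = {e₁,e₂}` and `Ψ = {e₁+e₂, 2e₁+e₂}` of `ℝ²` are
Riesz woven (every mixed family is a Riesz basis of `ℝ²`), but their canonical
Parseval frames are `{e₁,e₂}` and `{e₂,e₁}`, which are not woven (the weaving with
`σ = {1}` is `{e₁,e₁}`, which does not span `ℝ²`). -/
theorem stmt19 :
    let e : Fin 2 → EuclideanSpace ℝ (Fin 2) := fun j => EuclideanSpace.single j 1
    let Φ : Fin 2 → EuclideanSpace ℝ (Fin 2) := ![e 0, e 1]
    let Ψ : Fin 2 → EuclideanSpace ℝ (Fin 2) := ![e 0 + e 1, (2 : ℝ) • e 0 + e 1]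
    -- Φ and Ψ are Riesz woven: every mixed family is a (Riesz) basis of ℝ²
    (∀ σ : Finset (Fin 2),
      LinearIndependent ℝ (fun i => if i ∈ σ then Φ i else Ψ i) ∧
      Submodule.span ℝ (Set.range fun i => if i ∈ σ then Φ i else Ψ i) = ⊤) ∧
    -- the canonical Parseval frame of Φ is {e₁, e₂} (here S_Φ = I), and
    -- the canonical Parseval frame of Ψ is {e₂, e₁}: for any positive self-adjoint
    -- Q with Q² = S_Ψ⁻¹ one has Q(ψ₁) = e₂ and Q(ψ₂) = e₁
    (∀ Q : EuclideanSpace ℝ (Fin 2) →L[ℝ] EuclideanSpace ℝ (Fin 2),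
      IsSelfAdjoint Q → (∀ f, 0 ≤ ⟪Q f, f⟫) →
      (∀ f, Q (Q (∑ i : Fin 2, ⟪f, Ψ i⟫ • Ψ i)) = f) →
      Q (Ψ 0) = e 1 ∧ Q (Ψ 1) = e 0) ∧
    -- the canonical Parseval frames {e₁,e₂} and {e₂,e₁} are not woven
    ¬ ∃ A B : ℝ, 0 < A ∧ ∀ (σ : Finset (Fin 2)) (f : EuclideanSpace ℝ (Fin 2)),
        A * ‖f‖ ^ 2 ≤ (∑ i ∈ σ, ‖⟪f, ![e 0, e 1] i⟫‖ ^ 2) +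
            ∑ i ∈ σᶜ, ‖⟪f, ![e 1, e 0] i⟫‖ ^ 2 ∧
        (∑ i ∈ σ, ‖⟪f, ![e 0, e 1] i⟫‖ ^ 2) +
            (∑ i ∈ σᶜ, ‖⟪f, ![e 1, e 0] i⟫‖ ^ 2) ≤ B * ‖f‖ ^ 2 := by
  intro e Φ Ψ
  refine ⟨?_, ?_, ?_⟩
  · -- Riesz woven
    intro σ
    have hrw : (fun i => if i ∈ σ then Φ i else Ψ i) =
        ![if (0 : Fin 2) ∈ σ then Φ 0 else Ψ 0, if (1 : Fin 2) ∈ σ then Φ 1 else Ψ 1] := by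
      funext i; fin_cases i <;> rfl
    rw [hrw]
    by_cases h0 : (0 : Fin 2) ∈ σ <;> by_cases h1 : (1 : Fin 2) ∈ σ <;>
        simp only [h0, h1, if_true, if_false] <;>
      · apply pair_basis
        simp [Φ, Ψ, e, EuclideanSpace.single_apply]
        try norm_num
  · -- canonical Parseval frame of Ψ
    intro Q hQ hpos hinv
    exact qpart Q hQ hpos (fun f => by
      have h := hinv f
      rwa [Fin.sum_univ_two] at h)
  · -- not woven
    rintro ⟨A, B, hA, h⟩
    have h1 := (h {0} (e 1)).1
    have hcompl : ({0} : Finset (Fin 2))ᶜ = {1} := by decide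
    rw [hcompl] at h1
    simp only [Finset.sum_singleton] at h1
    have hz0 : ⟪e 1, ![e 0, e 1] 0⟫ = 0 := by
      simp [e, PiLp.inner_apply, Fin.sum_univ_two, EuclideanSpace.single_apply]
    have hz1 : ⟪e 1, ![e 1, e 0] 1⟫ = 0 := by
      simp [e, PiLp.inner_apply, Fin.sum_univ_two, EuclideanSpace.single_apply]
    rw [hz0, hz1] at h1
    have hnorm : ‖e 1‖ = 1 := by
      simp [e]
    rw [hnorm] at h1
    norm_num at h1
    linarith
end
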